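/- Let F be an IMMF with accuracy ε and define Λ_i(a,b) = ∂_{b_i}c_F(a,b) · (c_F(a,b))⁻¹ (quaternionic inverse). If |c_F(a,b)| ≥ ε^ν for some ν ∈ (0,1/2), then |Λ_i(a,b) − ∂_{b_i}φ(b) n_{θ(b)}| ≤ ε^{1−ν} a (|R₂(a,b)| + a|R₁(a,b)||∇φ(b)|), where R₁, R₂ are the remainder bounds from the wavelet approximation of an IMMF. -/

import Mathlib

/-!
With `c = c_F(a,b)`, `B` its leading term and `p n = ∂_iφ(b) n_{θ(b)}`, the quaternionic identity
`∂_{b_i}c · c⁻¹ - p n = (∂_{b_i}c - p n B + p n (B - c)) c⁻¹` reduces the estimate to the two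
remainder bounds: since `|n| = 1` and `|p| ≤ |∇φ(b)|`, the numerator is at most
`ε a |R₂| + |∇φ(b)| ε a² |R₁|`, and the lower bound `|c| ≥ ε^ν` trades one factor `ε` for `ε^{1-ν}`.
-/

open MeasureTheory Quaternion
open scoped RealInnerProductSpace

noncomputable section

local notation "E2" => EuclideanSpace ℝ (Fin 2)

/-- Standard basis vector of `ℝ²`. -/
def e2 (i : Fin 2) : EuclideanSpace ℝ (Fin 2) := EuclideanSpace.single i 1

/-- The pure unit Clifford quaternion `n_θ = cos θ i + sin θ j`. -/
def nQ (θ : ℝ) : ℍ[ℝ] := ⟨0, Real.cos θ, Real.sin θ, 0⟩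

/-- The data `(A, θ, φ)` defines an Intrinsic Monogenic Mode Function
`F(x) = A(x) exp(φ(x) n_{θ(x)})` with accuracy `ε` and second-derivative bound `M`:
`A, θ ∈ C¹ ∩ L^∞`, `A > 0`, `φ ∈ C²` with first derivatives bounded away from `0` and `∞`
and second derivatives bounded by `M`, and `A, θ, ∇²φ` slowly varying with respect to
`∇φ`. -/
def IsIMMF (A θ φ : EuclideanSpace ℝ (Fin 2) → ℝ) (ε M : ℝ) : Prop :=
  ContDiff ℝ 1 A ∧ ContDiff ℝ 1 θ ∧ ContDiff ℝ 2 φ ∧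
  (∀ x, 0 < A x) ∧ (∃ C, ∀ x, |A x| ≤ C) ∧ (∃ C, ∀ x, |θ x| ≤ C) ∧
  (∃ c C : ℝ, 0 < c ∧ ∀ (x : EuclideanSpace ℝ (Fin 2)) (i : Fin 2),
      c ≤ |fderiv ℝ φ x (e2 i)| ∧ |fderiv ℝ φ x (e2 i)| ≤ C) ∧
  (∀ (x : EuclideanSpace ℝ (Fin 2)) (i j : Fin 2),
      |fderiv ℝ (fun y => fderiv ℝ φ y (e2 j)) x (e2 i)| ≤ M) ∧
  (∀ (x : EuclideanSpace ℝ (Fin 2)) (i : Fin 2),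
      |fderiv ℝ A x (e2 i)| ≤ ε * |fderiv ℝ φ x (e2 i)|) ∧
  (∀ (x : EuclideanSpace ℝ (Fin 2)) (i : Fin 2),
      |fderiv ℝ θ x (e2 i)| ≤ ε * |fderiv ℝ φ x (e2 i)|) ∧
  (∀ (x : EuclideanSpace ℝ (Fin 2)) (i j : Fin 2),
      |fderiv ℝ (fun y => fderiv ℝ φ y (e2 j)) x (e2 i)| ≤ ε * ‖gradient φ x‖)

/-- The Intrinsic Monogenic Mode Function `F(x) = A(x) exp(φ(x) n_{θ(x)})`. -/
def IMMFfun (A θ φ : EuclideanSpace ℝ (Fin 2) → ℝ) (x : EuclideanSpace ℝ (Fin 2)) : ℍ[ℝ] :=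
  A x • (((Real.cos (φ x) : ℝ) : ℍ[ℝ]) + Real.sin (φ x) • nQ (θ x))

/-- The wavelet transform `c_F(a,b)` of the quaternion-valued `F` against the
isotropic real wavelet `ψ`. -/
def cF (ψ : E2 → ℝ) (F : E2 → ℍ[ℝ]) (a : ℝ) (b : E2) : ℍ[ℝ] :=
  ∫ x : E2, (a⁻¹ * ψ ((a⁻¹ : ℝ) • (x - b))) • F x

theorem norm_nQ (θ : ℝ) : ‖nQ θ‖ = 1 := by
  have h : ‖nQ θ‖ * ‖nQ θ‖ = 1 := by
    rw [← Quaternion.normSq_eq_norm_mul_self, Quaternion.normSq_def']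
    simp [nQ]
  nlinarith [norm_nonneg (nQ θ)]

theorem abs_fderiv_e2_le_norm_gradient (f : E2 → ℝ) (x : E2) (i : Fin 2) :
    |fderiv ℝ f x (e2 i)| ≤ ‖gradient f x‖ := by
  rw [← InnerProductSpace.toDual_symm_apply (x := e2 i), ← Real.norm_eq_abs]
  simpa [e2] using norm_inner_le_norm (𝕜 := ℝ) (gradient f x) (e2 i)

theorem norm_mul_inv_sub_smul_le {𝕜 K : Type*} [NormedField 𝕜] [NormedDivisionRing K]
    [NormedAlgebra 𝕜 K] {D c B n : K} {p : 𝕜} {r₁ r₂ δ : ℝ}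
    (hD : ‖D - p • (n * B)‖ ≤ r₂) (hB : ‖c - B‖ ≤ r₁) (hn : ‖n‖ ≤ 1)
    (hδ : 0 < δ) (hc : δ ≤ ‖c‖) :
    ‖D * c⁻¹ - p • n‖ ≤ (r₂ + ‖p‖ * r₁) / δ := by
  have hc0 : c ≠ 0 := norm_pos_iff.mp (hδ.trans_le hc)
  have hsplit : D * c⁻¹ - p • n = (D - p • (n * B) + p • (n * (B - c))) * c⁻¹ := by
    rw [mul_sub, smul_sub, add_sub, sub_add_cancel, sub_mul, smul_mul_assoc, mul_assoc,
      mul_inv_cancel₀ hc0, mul_one]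
  have hnum : ‖D - p • (n * B) + p • (n * (B - c))‖ ≤ r₂ + ‖p‖ * r₁ := by
    refine (norm_add_le _ _).trans (add_le_add hD ?_)
    rw [norm_smul, norm_mul, norm_sub_rev]
    exact mul_le_mul_of_nonneg_left
      ((mul_le_of_le_one_left (norm_nonneg _) hn).trans hB) (norm_nonneg p)
  rw [hsplit, norm_mul, norm_inv, ← div_eq_mul_inv]
  exact (div_le_div_of_nonneg_left (norm_nonneg _) hδ hc).trans
    (div_le_div_of_nonneg_right hnum hδ.le)

theorem immf_frequency_estimate_general (A θ φ : E2 → ℝ) (ε : ℝ) (hε : 0 < ε)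
    (ψ : E2 → ℝ) (Ψ : E2 → ℝ)
    (ν : ℝ)
    (a : ℝ) (b : E2) (R₁ R₂ : ℝ)
    (hR₁ : ‖cF ψ (IMMFfun A θ φ) a b
        - (a * Ψ (a • gradient φ b)) • IMMFfun A θ φ b‖ ≤ ε * a ^ 2 * |R₁|)
    (hR₂ : ∀ i : Fin 2,
      ‖fderiv ℝ (fun b' => cF ψ (IMMFfun A θ φ) a b') b (e2 i)
          - fderiv ℝ φ b (e2 i) •
              (nQ (θ b) * ((a * Ψ (a • gradient φ b)) • IMMFfun A θ φ b))‖ ≤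
        ε * a * |R₂|)
    (hlow : ε ^ ν ≤ ‖cF ψ (IMMFfun A θ φ) a b‖) :
    ∀ i : Fin 2,
      ‖fderiv ℝ (fun b' => cF ψ (IMMFfun A θ φ) a b') b (e2 i) *
            (cF ψ (IMMFfun A θ φ) a b)⁻¹
          - fderiv ℝ φ b (e2 i) • nQ (θ b)‖ ≤
        ε ^ (1 - ν) * a * (|R₂| + a * |R₁| * ‖gradient φ b‖) := by
  intro i
  have hεν : 0 < ε ^ ν := Real.rpow_pos_of_pos hε ν
  have hgrad := abs_fderiv_e2_le_norm_gradient φ b i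
  calc _ ≤ (ε * a * |R₂| + ‖fderiv ℝ φ b (e2 i)‖ * (ε * a ^ 2 * |R₁|)) / ε ^ ν :=
        norm_mul_inv_sub_smul_le (hR₂ i) hR₁ (norm_nQ _).le hεν hlow
    _ ≤ (ε * a * |R₂| + ‖gradient φ b‖ * (ε * a ^ 2 * |R₁|)) / ε ^ ν := by
        rw [Real.norm_eq_abs]; gcongr
    _ = ε ^ (1 - ν) * a * (|R₂| + a * |R₁| * ‖gradient φ b‖) := by
        rw [Real.rpow_sub hε, Real.rpow_one]; ring

/-- Frequency estimation for an IMMF: with `Λ_i(a,b) = ∂_{b_i} c_F(a,b) (c_F(a,b))⁻¹`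
(quaternionic inverse), if `|c_F(a,b)| ≥ ε^ν` with `ν ∈ (0,1/2)` and `R₁, R₂` are the
remainder bounds of the wavelet approximation of the IMMF, then
`|Λ_i(a,b) - ∂_{b_i}φ(b) n_{θ(b)}| ≤ ε^{1-ν} a (|R₂| + a |R₁| |∇φ(b)|)`. -/
theorem immf_frequency_estimate (A θ φ : E2 → ℝ) (ε M : ℝ) (hε : 0 < ε)
    (hIMMF : IsIMMF A θ φ ε M)
    (ψ : E2 → ℝ) (Ψ : E2 → ℝ)
    (hψint : Integrable ψ)
    (hψC1 : ContDiff ℝ 1 ψ) (hψderivint : Integrable (fun x => ‖fderiv ℝ ψ x‖))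
    (hψiso : ∀ ξ η : E2, ‖ξ‖ = ‖η‖ → ψ ξ = ψ η)
    (hΨ : ∀ ξ : E2, (Ψ ξ : ℂ) =
      (2 * Real.pi)⁻¹ * ∫ x : E2, (ψ x : ℂ) * Complex.exp (-Complex.I * (⟪ξ, x⟫ : ℝ)))
    (ν : ℝ) (hν : ν ∈ Set.Ioo (0 : ℝ) (1 / 2))
    (a : ℝ) (ha : 0 < a) (b : E2) (R₁ R₂ : ℝ)
    (hR₁ : ‖cF ψ (IMMFfun A θ φ) a b
        - (a * Ψ (a • gradient φ b)) • IMMFfun A θ φ b‖ ≤ ε * a ^ 2 * |R₁|)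
    (hR₂ : ∀ i : Fin 2,
      ‖fderiv ℝ (fun b' => cF ψ (IMMFfun A θ φ) a b') b (e2 i)
          - fderiv ℝ φ b (e2 i) •
              (nQ (θ b) * ((a * Ψ (a • gradient φ b)) • IMMFfun A θ φ b))‖ ≤
        ε * a * |R₂|)
    (hlow : ε ^ ν ≤ ‖cF ψ (IMMFfun A θ φ) a b‖) :
    ∀ i : Fin 2,
      ‖fderiv ℝ (fun b' => cF ψ (IMMFfun A θ φ) a b') b (e2 i) *
            (cF ψ (IMMFfun A θ φ) a b)⁻¹
          - fderiv ℝ φ b (e2 i) • nQ (θ b)‖ ≤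
        ε ^ (1 - ν) * a * (|R₂| + a * |R₁| * ‖gradient φ b‖) :=
  immf_frequency_estimate_general A θ φ ε hε ψ Ψ ν a b R₁ R₂ hR₁ hR₂ hlow

end
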